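/- arXiv:1407.7839 — 9 statements merged into one kernel-verified Lean document; each statement's English description precedes it below -/
import Mathlib

section
/- Let G be a finite abelian group and f : G → ℚ a symmetric function (f(a) = f(-a) for all a) satisfying the F-nefness condition: f(a)+f(b)+f(c)+f(a+b+c) ≥ f(a+b)+f(a+c)+f(b+c) for all a,b,c ∈ G. Then f is subadditive: f(a)+f(b) ≥ f(a+b) for all a,b ∈ G. -/
/-- An F-nef symmetric function on a finite abelian group is subadditive. -/
theorem stmt0 {G : Type*} [AddCommGroup G] [Fintype G] (f : G → ℚ)
    (hsymm : ∀ a : G, f a = f (-a))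
    (hFnef : ∀ a b c : G,
      f (a + b) + f (a + c) + f (b + c) ≤ f a + f b + f c + f (a + b + c)) :
    ∀ a b : G, f (a + b) ≤ f a + f b := by
  intro a b
  have h0 : 0 ≤ f 0 := by
    have h := hFnef a b (-(a + b))
    have h1 : a + -(a + b) = -b := by abel
    have h2 : b + -(a + b) = -a := by abel
    have h3 : a + b + -(a + b) = 0 := by abel
    rw [h1, h2, h3, ← hsymm a, ← hsymm b, ← hsymm (a + b)] at h
    linarith
  have key : ∀ n : ℕ, ∀ x c : G,
      (n : ℚ) * (f (x + c) - f x - f c) ≤ f (n • x + c) - f (n • x) - f c + f 0 := by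
    intro n
    induction n with
    | zero => intro x c; simp
    | succ n ih =>
      intro x c
      have h := hFnef (n • x) x c
      have ih' := ih x c
      have hs : (n + 1) • x = n • x + x := succ_nsmul x n
      rw [hs]
      push_cast
      linarith
  have hcard : (Fintype.card G) • a = 0 := by
    exact card_nsmul_eq_zero
  have hk := key (Fintype.card G) a b
  rw [hcard, zero_add] at hk
  have hpos : 0 < (Fintype.card G : ℚ) := by
    exact_mod_cast Fintype.card_pos
  nlinarith
end

section
/- Let G be a finite abelian group and f : G → ℚ an F-nef function. Then d_f(a,b) = f(a)+f(b)-f(a+b) is non-negative for all a,b ∈ G. -/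
/-- For an F-nef function on a finite abelian group, `d_f` is non-negative. -/
theorem stmt2 {G : Type*} [AddCommGroup G] [Fintype G] (f : G → ℚ)
    (hFnef : ∀ a b c : G,
      f (a + b) + f (a + c) + f (b + c) ≤ f a + f b + f c + f (a + b + c)) :
    ∀ a b : G, 0 ≤ f a + f b - f (a + b) := by
  have h0 : 0 ≤ f 0 := by have := hFnef 0 0 0; simp at this; linarith
  intro a b
  have key : ∀ x y z : G, f x + f (y + z) - f (x + (y + z)) ≤
      (f x + f y - f (x + y)) + (f x + f z - f (x + z)) := by
    intro x y z
    have h := hFnef x y z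
    rw [← add_assoc]
    have hcomm : y + z = z + y := add_comm y z
    linarith [hcomm ▸ h]
  have hn : ∀ n : ℕ, f a + f (n • b) - f (a + n • b) ≤
      n * (f a + f b - f (a + b)) + f 0 := by
    intro n
    induction n with
    | zero => simp
    | succ n ih =>
      have h1 := key a (n • b) b
      rw [succ_nsmul]
      push_cast
      linarith
  have hN := hn (addOrderOf b)
  rw [addOrderOf_nsmul_eq_zero b] at hN
  simp at hN
  have hpos : 0 < addOrderOf b := addOrderOf_pos b
  have hpos' : (0 : ℚ) < (addOrderOf b : ℚ) := by exact_mod_cast hpos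
  nlinarith [hN, hpos']
end

section
/- Let m ≥ 2 and define A_m : ZMod m → ℤ by A_m(i) = ⟨i⟩⟨m-i⟩, where ⟨k⟩ denotes the representative of k in {0,...,m-1}. Then A_m is F-nef: for all a,b,c ∈ ZMod m, A_m(a)+A_m(b)+A_m(c)+A_m(a+b+c) ≥ A_m(a+b)+A_m(a+c)+A_m(b+c). -/
set_option maxHeartbeats 1600000

/-- The standard function `A_m (i) = ⟨i⟩⟨m - i⟩` on `ZMod m` is F-nef. -/
theorem stmt3 (m : ℕ) (hm : 2 ≤ m) (a b c : ZMod m) :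
    let A : ZMod m → ℤ := fun i => (i.val : ℤ) * ((-i).val : ℤ)
    A (a + b) + A (a + c) + A (b + c) ≤ A a + A b + A c + A (a + b + c) := by
  intro A
  haveI : NeZero m := ⟨by omega⟩
  have hA : ∀ i : ZMod m, A i = (i.val : ℤ) * ((m : ℤ) - i.val) := by
    intro i
    by_cases hi : i = 0
    · simp [A, hi]
    · haveI : NeZero i := ⟨hi⟩
      have h1 := ZMod.val_neg_of_ne_zero i
      have h2 := ZMod.val_lt i
      show (i.val : ℤ) * ((-i).val : ℤ) = _
      rw [h1]; push_cast [le_of_lt h2]; ring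
  have carry : ∀ p q : ZMod m, ((p + q).val : ℤ) = p.val + q.val ∨
      ((p + q).val : ℤ) = p.val + q.val - m := by
    intro p q
    have h := ZMod.val_add p q
    have h1 := ZMod.val_lt p
    have h2 := ZMod.val_lt q
    rcases Nat.lt_or_ge (p.val + q.val) m with h3 | h3
    · left; rw [h, Nat.mod_eq_of_lt h3]; push_cast; ring
    · right
      have h4 : p.val + q.val - m < m := by omega
      rw [h, Nat.mod_eq_sub_mod h3, Nat.mod_eq_of_lt h4]; omega
  have hm0 : (0:ℤ) < m := by exact_mod_cast Nat.lt_of_lt_of_le Nat.zero_lt_two hm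
  have h1 := carry a b
  have h2 := carry a c
  have h3 := carry b c
  have h4 := carry (a + b) c
  have b1 : (0 : ℤ) ≤ a.val := Int.natCast_nonneg _
  have b2 : (0 : ℤ) ≤ b.val := Int.natCast_nonneg _
  have b3 : (0 : ℤ) ≤ c.val := Int.natCast_nonneg _
  have b7 : ((a + b + c).val : ℤ) < m := by exact_mod_cast ZMod.val_lt _
  have b8 : (a.val : ℤ) < m := by exact_mod_cast ZMod.val_lt _
  have b9 : (b.val : ℤ) < m := by exact_mod_cast ZMod.val_lt _
  have b10 : (c.val : ℤ) < m := by exact_mod_cast ZMod.val_lt _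
  have b11 : (0 : ℤ) ≤ (a + b).val := Int.natCast_nonneg _
  have b12 : (0 : ℤ) ≤ (a + c).val := Int.natCast_nonneg _
  have b13 : (0 : ℤ) ≤ (b + c).val := Int.natCast_nonneg _
  have b14 : (0 : ℤ) ≤ (a + b + c).val := Int.natCast_nonneg _
  have b4 : ((a + b).val : ℤ) < m := by exact_mod_cast ZMod.val_lt _
  have b5 : ((a + c).val : ℤ) < m := by exact_mod_cast ZMod.val_lt _
  have b6 : ((b + c).val : ℤ) < m := by exact_mod_cast ZMod.val_lt _
  rw [hA, hA, hA, hA, hA, hA, hA]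
  rcases h1 with h1 | h1 <;> rcases h2 with h2 | h2 <;> rcases h3 with h3 | h3 <;>
      rcases h4 with h4 | h4 <;>
    simp only [h4, h1, h2, h3] at b7 b14 ⊢ <;>
    linarith [mul_nonneg hm0.le b14, mul_nonneg hm0.le b1, mul_nonneg hm0.le b2,
      mul_nonneg hm0.le b3, mul_nonneg hm0.le (sub_nonneg.mpr b7.le),
      mul_nonneg hm0.le (sub_nonneg.mpr b8.le), mul_nonneg hm0.le (sub_nonneg.mpr b9.le),
      mul_nonneg hm0.le (sub_nonneg.mpr b10.le)]
end

section
/- Let m ≥ 2 and let a,b,c,d be integers in {1,...,m-1} with a+b+c+d ≡ 0 (mod m). Write A_m(i) = ⟨i⟩_m(m - ⟨i⟩_m). If a+b+c+d = 2m, then A_m(a)+A_m(b)+A_m(c)+A_m(a+b+c) - A_m(a+b) - A_m(a+c) - A_m(b+c) = 2m · min{a, b, c, d, m-a, m-b, m-c, m-d}, where the sums a+b+c, a+b, a+c, b+c are taken modulo m. -/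
/-!
On `[0, 2m)` the function `A_m` is the quadratic `s (m - s)` corrected by `2m · max (s - m) 0`.
The quadratic part has vanishing second difference, so the defect is `2m` times a piecewise
linear expression in the sums that exceed `m`; comparing the cases `a + b ≤ m` or `a + b ≥ m`
(and likewise for `a + c`, `b + c`) identifies it with the minimum.
-/

def standardFn (m k : ℤ) : ℤ := k % m * (m - k % m)

theorem standardFn_eq_of_lt_two_mul {m s : ℤ} (hs₀ : 0 ≤ s) (hs₁ : s < 2 * m) :
    standardFn m s = s * (m - s) + 2 * m * max (s - m) 0 := by
  unfold standardFn
  rcases lt_or_ge s m with hsm | hsm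
  · rw [Int.emod_eq_of_lt hs₀ hsm, max_eq_right (by omega)]
    ring
  · have hmod : s % m = s - m := by
      rw [← Int.sub_emod_right, Int.emod_eq_of_lt (by omega) (by omega)]
    rw [hmod, max_eq_left (by omega)]
    ring

theorem standardFn_defect_eq {m a b c : ℤ} (ha : 0 ≤ a ∧ a ≤ m) (hb : 0 ≤ b ∧ b ≤ m)
    (hc : 0 ≤ c ∧ c ≤ m) (habc : a + b + c < 2 * m) :
    standardFn m a + standardFn m b + standardFn m c + standardFn m (a + b + c)
        - standardFn m (a + b) - standardFn m (a + c) - standardFn m (b + c)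
      = 2 * m * (max (a + b + c - m) 0 - max (a + b - m) 0 - max (a + c - m) 0
          - max (b + c - m) 0) := by
  rw [standardFn_eq_of_lt_two_mul ha.1 (by omega), standardFn_eq_of_lt_two_mul hb.1 (by omega),
    standardFn_eq_of_lt_two_mul hc.1 (by omega), standardFn_eq_of_lt_two_mul (by omega) habc,
    standardFn_eq_of_lt_two_mul (by omega : 0 ≤ a + b) (by omega),
    standardFn_eq_of_lt_two_mul (by omega : 0 ≤ a + c) (by omega),
    standardFn_eq_of_lt_two_mul (by omega : 0 ≤ b + c) (by omega),
    max_eq_right (by omega : a - m ≤ 0), max_eq_right (by omega : b - m ≤ 0),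
    max_eq_right (by omega : c - m ≤ 0)]
  ring

theorem max_sub_max_sub_max_sub_max_eq_min {m a b c d : ℤ}
    (ha : 1 ≤ a ∧ a ≤ m - 1) (hb : 1 ≤ b ∧ b ≤ m - 1)
    (hc : 1 ≤ c ∧ c ≤ m - 1) (hd : 1 ≤ d ∧ d ≤ m - 1)
    (hsum : a + b + c + d = 2 * m) :
    max (a + b + c - m) 0 - max (a + b - m) 0 - max (a + c - m) 0 - max (b + c - m) 0
      = min (min (min a b) (min c d)) (min (min (m - a) (m - b)) (min (m - c) (m - d))) := by
  rw [max_eq_left (by omega : 0 ≤ a + b + c - m)]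
  rcases le_total (a + b) m with h₁ | h₁ <;> rcases le_total (a + c) m with h₂ | h₂ <;>
    rcases le_total (b + c) m with h₃ | h₃ <;>
    simp only [max_eq_left, max_eq_right, sub_nonneg, sub_nonpos, h₁, h₂, h₃] <;> omega

theorem stmt4_general (m a b c d : ℤ)
    (ha : 1 ≤ a ∧ a ≤ m - 1) (hb : 1 ≤ b ∧ b ≤ m - 1)
    (hc : 1 ≤ c ∧ c ≤ m - 1) (hd : 1 ≤ d ∧ d ≤ m - 1)
    (hsum : a + b + c + d = 2 * m) :
    let A : ℤ → ℤ := fun k => (k % m) * (m - k % m)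
    A a + A b + A c + A (a + b + c) - A (a + b) - A (a + c) - A (b + c)
      = 2 * m * min (min (min a b) (min c d))
          (min (min (m - a) (m - b)) (min (m - c) (m - d))) := by
  show standardFn m a + standardFn m b + standardFn m c + standardFn m (a + b + c)
      - standardFn m (a + b) - standardFn m (a + c) - standardFn m (b + c) = _
  rw [standardFn_defect_eq ⟨by omega, by omega⟩ ⟨by omega, by omega⟩ ⟨by omega, by omega⟩
    (by omega), max_sub_max_sub_max_sub_max_eq_min ha hb hc hd hsum]

/-- The F-nefness defect of the standard function in the case `a+b+c+d = 2m`. -/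
theorem stmt4 (m a b c d : ℤ) (hm : 2 ≤ m)
    (ha : 1 ≤ a ∧ a ≤ m - 1) (hb : 1 ≤ b ∧ b ≤ m - 1)
    (hc : 1 ≤ c ∧ c ≤ m - 1) (hd : 1 ≤ d ∧ d ≤ m - 1)
    (hsum : a + b + c + d = 2 * m) :
    let A : ℤ → ℤ := fun k => (k % m) * (m - k % m)
    A a + A b + A c + A (a + b + c) - A (a + b) - A (a + c) - A (b + c)
      = 2 * m * min (min (min a b) (min c d))
          (min (min (m - a) (m - b)) (min (m - c) (m - d))) :=
  stmt4_general m a b c d ha hb hc hd hsum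
end

section
/- Let m ≥ 2 and let a,b,c,d be integers in {0,...,m-1} with a+b+c+d = m. Then A_m(a)+A_m(b)+A_m(c)+A_m(a+b+c) = A_m(a+b)+A_m(a+c)+A_m(b+c), where A_m(k) = ⟨k⟩_m(m - ⟨k⟩_m) and all arguments are taken modulo m. -/
private lemma emod_small (m x : ℤ) (h1 : 0 ≤ x) (h2 : x < m) : x % m = x :=
  Int.emod_eq_of_lt h1 h2

private lemma emod_big (m x : ℤ) (h1 : m ≤ x) (h2 : x < 2 * m) : x % m = x - m := by
  have : x % m = (x - m) % m := by
    rw [Int.sub_emod, Int.emod_self, sub_zero, Int.emod_emod_of_dvd _ dvd_rfl]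
  rw [this, Int.emod_eq_of_lt (by omega) (by omega)]

/-- The F-nefness inequality for the standard function holds with equality
when `a+b+c+d = m` with `a,b,c,d ∈ {0,…,m-1}`. -/
theorem stmt5 (m a b c d : ℤ) (hm : 2 ≤ m)
    (ha : 0 ≤ a ∧ a ≤ m - 1) (hb : 0 ≤ b ∧ b ≤ m - 1)
    (hc : 0 ≤ c ∧ c ≤ m - 1) (hd : 0 ≤ d ∧ d ≤ m - 1)
    (hsum : a + b + c + d = m) :
    let A : ℤ → ℤ := fun k => (k % m) * (m - k % m)
    A a + A b + A c + A (a + b + c) = A (a + b) + A (a + c) + A (b + c) := by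
  intro A
  obtain ⟨ha1, ha2⟩ := ha
  obtain ⟨hb1, hb2⟩ := hb
  obtain ⟨hc1, hc2⟩ := hc
  obtain ⟨hd1, hd2⟩ := hd
  simp only [A]
  rw [emod_small m a ha1 (by omega), emod_small m b hb1 (by omega),
      emod_small m c hc1 (by omega)]
  rcases lt_or_ge (a + b + c) m with hs | hs
  · rw [emod_small m (a + b + c) (by omega) hs,
        emod_small m (a + b) (by omega) (by omega),
        emod_small m (a + c) (by omega) (by omega),
        emod_small m (b + c) (by omega) (by omega)]
    ring
  · rw [emod_big m (a + b + c) hs (by omega)]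
    rcases lt_or_ge (a + b) m with hab | hab
    · rw [emod_small m (a + b) (by omega) hab]
      rcases lt_or_ge (a + c) m with hac | hac
      · rw [emod_small m (a + c) (by omega) hac]
        rcases lt_or_ge (b + c) m with hbc | hbc
        · rw [emod_small m (b + c) (by omega) hbc]; nlinarith [hs, hab, hac, hbc]
        · rw [emod_big m (b + c) hbc (by omega)]; nlinarith [hs, hab, hac, hbc]
      · rw [emod_big m (a + c) hac (by omega)]
        have hbc : b + c < m := by omega
        rw [emod_small m (b + c) (by omega) hbc]; nlinarith [hs, hab, hac, hbc]
    · rw [emod_big m (a + b) hab (by omega)]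
      have hac : a + c < m := by omega
      have hbc : b + c < m := by omega
      rw [emod_small m (a + c) (by omega) hac, emod_small m (b + c) (by omega) hbc]
      nlinarith [hs, hab, hac, hbc]
end

section
/- The cyclic quadratic form B(x_0,...,x_{m-1}) = Σ_{i=0}^{m-1} (x_i - x_{i+1} + x_{i+2})^2 (indices mod m) satisfies: for every integer vector (a_0,...,a_{m-1}) with Σ a_i = r where 2 ≤ r ≤ m-2, we have B(a_0,...,a_{m-1}) ≥ r. Moreover, the vector v_r = (1,...,1,0,...,0) (r ones) attains B(v_r) = r. -/
private lemma sum_shift {m : ℕ} [NeZero m] (x : Fin m → ℤ) (c : Fin m) :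
    ∑ i : Fin m, x (i + c) = ∑ i : Fin m, x i :=
  Fintype.sum_equiv (Equiv.addRight c) _ _ (fun i => rfl)

private lemma sum_y {m : ℕ} [NeZero m] (x : Fin m → ℤ) :
    ∑ i : Fin m, (x i - x (i + 1) + x (i + 2)) = ∑ i : Fin m, x i := by
  rw [Finset.sum_add_distrib, Finset.sum_sub_distrib, sum_shift x 1, sum_shift x 2]
  ring

/-- For `2 ≤ r ≤ m-2`, the cyclic form `B(x) = Σ (x_i - x_{i+1} + x_{i+2})²`
satisfies `B(a) ≥ r` on the hyperplane `Σ a_i = r`, with value `r` at `v_r`. -/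
theorem stmt6 (m : ℕ) [NeZero m] (hm : 4 ≤ m) (r : ℕ) (hr1 : 2 ≤ r) (hr2 : r ≤ m - 2) :
    let B : (Fin m → ℤ) → ℤ := fun x => ∑ i, (x i - x (i + 1) + x (i + 2)) ^ 2
    (∀ a : Fin m → ℤ, (∑ i, a i) = (r : ℤ) → (r : ℤ) ≤ B a) ∧
      B (fun i => if (i : ℕ) < r then 1 else 0) = (r : ℤ) := by
  intro B
  constructor
  · intro a ha
    have key : ∑ i : Fin m, (a i - a (i + 1) + a (i + 2)) = (r : ℤ) := by
      rw [sum_y a, ha]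
    calc (r : ℤ) = ∑ i : Fin m, (a i - a (i + 1) + a (i + 2)) := key.symm
      _ ≤ ∑ i : Fin m, (a i - a (i + 1) + a (i + 2)) ^ 2 :=
        Finset.sum_le_sum fun i _ => Int.le_self_sq _
  · set f : Fin m → ℤ := fun i => if (i : ℕ) < r then 1 else 0 with hf
    have hsq : ∀ i : Fin m,
        (f i - f (i + 1) + f (i + 2)) ^ 2 = f i - f (i + 1) + f (i + 2) := by
      intro i
      have hp : (i : ℕ) < m := i.isLt
      have h1 : ((i + 1 : Fin m) : ℕ) = ((i : ℕ) + 1) % m := by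
        simp [Fin.add_def, Nat.mod_eq_of_lt (show 1 < m by omega)]
      have h2 : ((i + 2 : Fin m) : ℕ) = ((i : ℕ) + 2) % m := by
        have h2v : ((2 : Fin m) : ℕ) = 2 := by
          have : ((2 : Fin m) : ℕ) = 2 % m := rfl
          rw [this, Nat.mod_eq_of_lt (by omega)]
        simp [Fin.add_def, h2v]
      have e1 : ((i : ℕ) + 1) % m = if (i : ℕ) + 1 = m then 0 else (i : ℕ) + 1 := by
        split
        · simp_all
        · exact Nat.mod_eq_of_lt (by omega)
      have e2 : ((i : ℕ) + 2) % m =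
          if (i : ℕ) + 2 = m then 0 else if (i : ℕ) + 1 = m then 1 else (i : ℕ) + 2 := by
        rcases eq_or_ne ((i : ℕ) + 2) m with h | h
        · simp [h]
        · rcases eq_or_ne ((i : ℕ) + 1) m with h' | h'
          · have hx : (i : ℕ) + 2 = m + 1 := by omega
            rw [if_neg h, if_pos h', hx, Nat.add_mod_left, Nat.mod_eq_of_lt (by omega)]
          · rw [if_neg h, if_neg h', Nat.mod_eq_of_lt (by omega)]
      simp only [hf, h1, h2, e1, e2]
      have hm2 : r ≤ m - 2 := hr2
      split_ifs <;> norm_num <;> omega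
    have : B f = ∑ i : Fin m, (f i - f (i + 1) + f (i + 2)) := by
      exact Finset.sum_congr rfl fun i _ => hsq i
    rw [this, sum_y f]
    have : ∑ i : Fin m, f i = ∑ i : Fin m, if (i : ℕ) < r then (1 : ℤ) else 0 := rfl
    rw [this, Finset.sum_boole]
    have hfilter : (Finset.univ.filter fun i : Fin m => (i : ℕ) < r)
        = Finset.map (Fin.castLEEmb (show r ≤ m by omega)) Finset.univ := by
      ext j
      simp only [Finset.mem_filter, Finset.mem_univ, true_and, Finset.mem_map,
        Fin.castLEEmb_apply]
      constructor
      · intro hj; exact ⟨⟨j, hj⟩, Fin.ext rfl⟩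
      · rintro ⟨k, rfl⟩; exact k.isLt
    rw [hfilter]
    simp
end

section
/- Let m ≥ 4 and consider B(x_0,...,x_{m-1}) = Σ_{i=0}^{m-1} (x_i - x_{i+1} + x_{i+2})^2 with indices mod m. There exists an integer vector (a_0,...,a_{m-1}) with a_i - a_{i+1} + a_{i+2} = 0 for all i = 1,...,m-1 (indices mod m) and a_0 - a_1 + a_2 = ±1 if and only if m ≡ 1 (mod 6) or m ≡ -1 (mod 6). -/
private lemma sum_shift7 {m : ℕ} [NeZero m] (k : Fin m) (f : Fin m → ℤ) :
    ∑ i, f (i + k) = ∑ i, f i :=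
  Fintype.sum_equiv (Equiv.addRight k) _ _ (fun _ => rfl)

private lemma build7 (m : ℕ) [NeZero m] (hm : 4 ≤ m) (p : ℕ → ℤ) (v : ℤ)
    (hrec : ∀ n : ℕ, p (n % 6) - p ((n + 1) % 6) + p ((n + 2) % 6) = 0)
    (hm2 : p ((m - 2) % 6) - p ((m - 1) % 6) + v = 0)
    (hm1 : p ((m - 1) % 6) - v + p 1 = 0)
    (hdef : v - p 1 + p 2 = 1 ∨ v - p 1 + p 2 = -1) :
    ∃ a : Fin m → ℤ, (∀ i : Fin m, i ≠ 0 → a i - a (i + 1) + a (i + 2) = 0) ∧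
      (a 0 - a 1 + a 2 = 1 ∨ a 0 - a 1 + a 2 = -1) := by
  have e0 : (0 : Fin m).val = 0 := Fin.val_zero m
  have e1 : (1 : Fin m).val = 1 := by
    have : (1 : Fin m).val = 1 % m := rfl
    rw [this, Nat.mod_eq_of_lt (by omega)]
  have e2 : (2 : Fin m).val = 2 := by
    have : (2 : Fin m).val = 2 % m := rfl
    rw [this, Nat.mod_eq_of_lt (by omega)]
  refine ⟨fun i => if i.val = 0 then v else p (i.val % 6), ?_, ?_⟩
  · intro i hi
    have hn : i.val < m := i.isLt
    have hn0 : i.val ≠ 0 := by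
      intro h; exact hi (Fin.ext (by rw [h, e0]))
    have v1 : (i + 1).val = (i.val + 1) % m := by rw [Fin.val_add, e1]
    have v2 : (i + 2).val = (i.val + 2) % m := by rw [Fin.val_add, e2]
    rcases Nat.lt_or_ge (i.val + 2) m with h | h
    · have w1 : (i + 1).val = i.val + 1 := by rw [v1]; exact Nat.mod_eq_of_lt (by omega)
      have w2 : (i + 2).val = i.val + 2 := by rw [v2]; exact Nat.mod_eq_of_lt (by omega)
      beta_reduce
      rw [w1, w2, if_neg hn0, if_neg (by omega : ¬ i.val + 1 = 0),
        if_neg (by omega : ¬ i.val + 2 = 0)]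
      exact hrec i.val
    · rcases Nat.lt_or_ge (i.val + 1) m with h' | h'
      · -- i.val = m - 2
        have hv : i.val = m - 2 := by omega
        have w1 : (i + 1).val = i.val + 1 := by rw [v1]; exact Nat.mod_eq_of_lt (by omega)
        have w2 : (i + 2).val = 0 := by
          rw [v2, (by omega : i.val + 2 = m), Nat.mod_self]
        beta_reduce
        rw [if_neg hn0, if_neg (by omega : ¬ (i+1).val = 0), if_pos w2, w1, hv,
          (by omega : m - 2 + 1 = m - 1)]
        exact hm2
      · -- i.val = m - 1
        have hv : i.val = m - 1 := by omega
        have w1 : (i + 1).val = 0 := by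
          rw [v1, (by omega : i.val + 1 = m), Nat.mod_self]
        have w2 : (i + 2).val = 1 := by
          rw [v2, (by omega : i.val + 2 = m + 1), Nat.add_mod_left,
            Nat.mod_eq_of_lt (by omega)]
        beta_reduce
        rw [if_neg hn0, if_pos w1, if_neg (by omega : ¬ (i+2).val = 0), w2, hv,
          Nat.mod_eq_of_lt (by omega : 1 < 6)]
        exact hm1
  · beta_reduce
    rw [if_pos e0, if_neg (by omega : ¬ (1 : Fin m).val = 0),
      if_neg (by omega : ¬ (2 : Fin m).val = 0), e1, e2,
      Nat.mod_eq_of_lt (by omega : 1 < 6), Nat.mod_eq_of_lt (by omega : 2 < 6)]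
    exact hdef

private lemma nosol7 (m : ℕ) [NeZero m] (hm : 4 ≤ m) (c : Fin m → ℤ) (k : ℤ)
    (hc0 : c 0 = 1) (hk : 2 ≤ k)
    (hdvd : ∀ i : Fin m, k ∣ (c (i + 2) - c (i + 1) + c i))
    (a : Fin m → ℤ)
    (h1 : ∀ i : Fin m, i ≠ 0 → a i - a (i + 1) + a (i + 2) = 0)
    (h2 : a 0 - a 1 + a 2 = 1 ∨ a 0 - a 1 + a 2 = -1) : False := by
  have h112 : (1 + 1 : Fin m) = 2 := by
    apply Fin.ext
    rw [Fin.val_add]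
    have e1 : (1 : Fin m).val = 1 % m := rfl
    have e2 : (2 : Fin m).val = 2 % m := rfl
    rw [e1, e2, Nat.mod_eq_of_lt (by omega : 1 < m)]
  set S := ∑ i : Fin m, c i * (a i - a (i + 1) + a (i + 2)) with hSdef
  have hS1 : S = a 0 - a 1 + a 2 := by
    rw [hSdef, Finset.sum_eq_single (0 : Fin m)]
    · rw [hc0, one_mul, zero_add, zero_add]
    · intro b _ hb; rw [h1 b hb, mul_zero]
    · intro h; exact absurd (Finset.mem_univ 0) h
  have hS2 : k ∣ S := by
    have split : S = (∑ i, c i * a i) - (∑ i, c i * a (i + 1)) + ∑ i, c i * a (i + 2) := by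
      rw [hSdef, ← Finset.sum_sub_distrib, ← Finset.sum_add_distrib]
      exact Finset.sum_congr rfl (fun i _ => by ring)
    have r1 : (∑ i, c i * a i) = ∑ i, c (i + 2) * a (i + 2) :=
      (sum_shift7 2 (fun j => c j * a j)).symm
    have r2 : (∑ i, c i * a (i + 1)) = ∑ i, c (i + 1) * a (i + 2) := by
      rw [← sum_shift7 1 (fun j => c j * a (j + 1))]
      exact Finset.sum_congr rfl (fun i _ => by rw [add_assoc, h112])
    rw [split, r1, r2, ← Finset.sum_sub_distrib, ← Finset.sum_add_distrib]
    apply Finset.dvd_sum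
    intro i _
    have : c (i + 2) * a (i + 2) - c (i + 1) * a (i + 2) + c i * a (i + 2)
        = (c (i + 2) - c (i + 1) + c i) * a (i + 2) := by ring
    rw [this]
    exact (hdvd i).mul_right _
  have hk1 : k ∣ (1 : ℤ) := by
    rcases h2 with h | h
    · rw [hS1, h] at hS2; exact hS2
    · rw [hS1, h] at hS2; exact (dvd_neg).mp hS2
  have := Int.le_of_dvd one_pos hk1
  omega

/-- Existence of an integer vector with `a_i - a_{i+1} + a_{i+2} = 0` for
`i = 1,…,m-1` (cyclically) and `a_0 - a_1 + a_2 = ±1`, iff `m ≡ ±1 (mod 6)`. -/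
theorem stmt7 (m : ℕ) [NeZero m] (hm : 4 ≤ m) :
    (∃ a : Fin m → ℤ,
      (∀ i : Fin m, i ≠ 0 → a i - a (i + 1) + a (i + 2) = 0) ∧
      (a 0 - a 1 + a 2 = 1 ∨ a 0 - a 1 + a 2 = -1)) ↔
    (m % 6 = 1 ∨ m % 6 = 5) := by
  have e1m : (1 : Fin m).val = 1 := by
    have : (1 : Fin m).val = 1 % m := rfl
    rw [this, Nat.mod_eq_of_lt (by omega)]
  have e2m : (2 : Fin m).val = 2 := by
    have : (2 : Fin m).val = 2 % m := rfl
    rw [this, Nat.mod_eq_of_lt (by omega)]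
  constructor
  · rintro ⟨a, h1, h2⟩
    by_contra hmod
    push_neg at hmod
    obtain ⟨hA, hB⟩ := hmod
    have hcase : 2 ∣ m ∨ 3 ∣ m := by omega
    rcases hcase with hd | hd
    · -- even case, k = 3
      refine nosol7 m hm (fun i => if i.val % 2 = 0 then 1 else -1) 3 ?_ (by norm_num) ?_ a h1 h2
      · beta_reduce
        rw [Fin.val_zero]
        norm_num
      · intro i
        have p1 : (i + 1).val % 2 = (i.val + 1) % 2 := by
          rw [Fin.val_add, e1m]; exact Nat.mod_mod_of_dvd _ hd
        have p2 : (i + 2).val % 2 = (i.val + 2) % 2 := by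
          rw [Fin.val_add, e2m]; exact Nat.mod_mod_of_dvd _ hd
        beta_reduce
        rcases Nat.mod_two_eq_zero_or_one i.val with h | h
        · rw [if_pos h, if_neg (by omega : ¬ (i+1).val % 2 = 0),
            if_pos (by omega : (i+2).val % 2 = 0)]
          decide
        · rw [if_neg (by omega : ¬ i.val % 2 = 0), if_pos (by omega : (i+1).val % 2 = 0),
            if_neg (by omega : ¬ (i+2).val % 2 = 0)]
          decide
    · -- 3 ∣ m case, k = 2
      refine nosol7 m hm (fun i => if i.val % 3 = 2 then 0 else 1) 2 ?_ (by norm_num) ?_ a h1 h2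
      · beta_reduce
        rw [Fin.val_zero, if_neg (by norm_num : ¬ (0:ℕ) % 3 = 2)]
      · intro i
        have p1 : (i + 1).val % 3 = (i.val + 1) % 3 := by
          rw [Fin.val_add, e1m]; exact Nat.mod_mod_of_dvd _ hd
        have p2 : (i + 2).val % 3 = (i.val + 2) % 3 := by
          rw [Fin.val_add, e2m]; exact Nat.mod_mod_of_dvd _ hd
        beta_reduce
        have h3 : i.val % 3 = 0 ∨ i.val % 3 = 1 ∨ i.val % 3 = 2 := by omega
        rcases h3 with h | h | h
        · rw [if_pos (by omega : (i+2).val % 3 = 2), if_neg (by omega : ¬ (i+1).val % 3 = 2),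
            if_neg (by omega : ¬ i.val % 3 = 2)]
          decide
        · rw [if_neg (by omega : ¬ (i+2).val % 3 = 2), if_pos (by omega : (i+1).val % 3 = 2),
            if_neg (by omega : ¬ i.val % 3 = 2)]
          decide
        · rw [if_neg (by omega : ¬ (i+2).val % 3 = 2), if_neg (by omega : ¬ (i+1).val % 3 = 2),
            if_pos (by omega : i.val % 3 = 2)]
          decide
  · rintro (h | h)
    · -- m % 6 = 1, pattern [0,1,1,0,-1,-1], v = 1
      refine build7 m hm
        (fun r => match r with | 0 => 0 | 1 => 1 | 2 => 1 | 3 => 0 | 4 => -1 | _ => -1) 1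
        ?_ ?_ ?_ ?_
      · intro n
        have r6 : n % 6 < 6 := Nat.mod_lt _ (by omega)
        have f1 : (n + 1) % 6 = (n % 6 + 1) % 6 := by omega
        have f2 : (n + 2) % 6 = (n % 6 + 2) % 6 := by omega
        rw [f1, f2]
        have : n % 6 = 0 ∨ n % 6 = 1 ∨ n % 6 = 2 ∨ n % 6 = 3 ∨ n % 6 = 4 ∨ n % 6 = 5 := by
          omega
        rcases this with h | h | h | h | h | h <;> rw [h] <;> decide
      · rw [(by omega : (m - 2) % 6 = 5), (by omega : (m - 1) % 6 = 0)]; decide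
      · rw [(by omega : (m - 1) % 6 = 0)]; decide
      · left; decide
    · -- m % 6 = 5, pattern [1,1,0,-1,-1,0], v = 0
      refine build7 m hm
        (fun r => match r with | 0 => 1 | 1 => 1 | 2 => 0 | 3 => -1 | 4 => -1 | _ => 0) 0
        ?_ ?_ ?_ ?_
      · intro n
        have f1 : (n + 1) % 6 = (n % 6 + 1) % 6 := by omega
        have f2 : (n + 2) % 6 = (n % 6 + 2) % 6 := by omega
        rw [f1, f2]
        have : n % 6 = 0 ∨ n % 6 = 1 ∨ n % 6 = 2 ∨ n % 6 = 3 ∨ n % 6 = 4 ∨ n % 6 = 5 := by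
          omega
        rcases this with h | h | h | h | h | h <;> rw [h] <;> decide
      · rw [(by omega : (m - 2) % 6 = 3), (by omega : (m - 1) % 6 = 4)]; decide
      · rw [(by omega : (m - 1) % 6 = 4)]; decide
      · right; decide
end

section
/- For every integer r with 0 ≤ r ≤ m and a symmetric function f : ZMod m → ℚ, we have Σ_{i=0}^{r-1} Σ_{j=0}^{r-1} q_f(i-j) = f(r) - f(0), where q_f(a) = (f(a+1)+f(a-1)-2f(a))/2 and i-j and r are interpreted in ZMod m. -/
/-- Telescoping identity: `Σ_{0 ≤ i,j ≤ r-1} q_f(i-j) = f r - f 0`. -/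
theorem stmt12 (m : ℕ) [NeZero m] (f : ZMod m → ℚ) (hsymm : ∀ a, f a = f (-a))
    (r : ℕ) (hr : r ≤ m) :
    ∑ i ∈ Finset.range r, ∑ j ∈ Finset.range r,
        (f (((i : ZMod m) - (j : ZMod m)) + 1) + f (((i : ZMod m) - (j : ZMod m)) - 1)
          - 2 * f ((i : ZMod m) - (j : ZMod m))) / 2
      = f ((r : ZMod m)) - f 0 := by
  clear hr
  set q : ZMod m → ℚ := fun a => (f (a + 1) + f (a - 1) - 2 * f a) / 2 with hq
  have qsymm : ∀ a, q (-a) = q a := by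
    intro a
    simp only [hq]
    rw [hsymm (-a + 1), hsymm (-a - 1), hsymm (-a)]
    ring_nf
  show ∑ i ∈ Finset.range r, ∑ j ∈ Finset.range r, q ((i : ZMod m) - (j : ZMod m))
      = f ((r : ZMod m)) - f 0
  induction r with
  | zero => simp
  | succ r ih =>
    have hcast : ((r + 1 : ℕ) : ZMod m) = (r : ZMod m) + 1 := by push_cast; ring
    simp only [Finset.sum_range_succ, Finset.sum_add_distrib]
    rw [ih]
    -- key telescoping: 2 * Σ_{k<r} q(k+1) = (f(r+1) - f r) - (f 1 - f 0)
    have htel : ∑ k ∈ Finset.range r, 2 * q ((k : ZMod m) + 1)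
        = (f ((r : ZMod m) + 1) - f (r : ZMod m)) - (f 1 - f 0) := by
      have := Finset.sum_range_sub (fun k => f ((k : ZMod m) + 1) - f (k : ZMod m)) r
      simp only [Nat.cast_zero, zero_add] at this
      rw [← this]
      apply Finset.sum_congr rfl
      intro k _
      have hc : ((k + 1 : ℕ) : ZMod m) = (k : ZMod m) + 1 := by push_cast; ring
      simp only [hq, hc]
      ring_nf
    have hrefl : ∑ j ∈ Finset.range r, q ((r : ZMod m) - (j : ZMod m))
        = ∑ k ∈ Finset.range r, q ((k : ZMod m) + 1) := by
      rw [← Finset.sum_range_reflect (fun k => q ((k : ZMod m) + 1)) r]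
      apply Finset.sum_congr rfl
      intro j hj
      have hj' : j < r := Finset.mem_range.mp hj
      have h1 : (r - 1 - j : ℕ) = r - (j + 1) := by omega
      have h2 : ((r - (j + 1) : ℕ) : ZMod m) = (r : ZMod m) - ((j : ZMod m) + 1) := by
        rw [Nat.cast_sub (by omega)]
        push_cast; ring
      rw [h1, h2]
      ring_nf
    have hsymmsum : ∑ i ∈ Finset.range r, q ((i : ZMod m) - ((r : ℕ) : ZMod m))
        = ∑ j ∈ Finset.range r, q ((r : ZMod m) - (j : ZMod m)) := by
      apply Finset.sum_congr rfl
      intro i _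
      rw [← qsymm]
      ring_nf
    have hq0 : q (((r : ℕ) : ZMod m) - ((r : ℕ) : ZMod m)) = f 1 - f 0 := by
      simp only [sub_self, hq, zero_add, zero_sub, ← hsymm 1]
      ring
    rw [hsymmsum, hrefl, hq0, hcast]
    have h2T : ∑ k ∈ Finset.range r, q ((k : ZMod m) + 1)
        = ((f ((r : ZMod m) + 1) - f (r : ZMod m)) - (f 1 - f 0)) / 2 := by
      rw [← Finset.mul_sum] at htel
      linarith [htel]
    rw [h2T]
    ring
end

section
/- Let m = 2k+1 with k ≥ 1. The cyclic quadratic form D(x_0,...,x_{m-1}) = Σ_{i=0}^{m-1} (x_i + x_{i+k})^2 (indices mod m) satisfies Condition (r) for all r: for every integer vector x with Σ x_i = r (0 ≤ r ≤ m-1), D(x) ≥ D(v_r), where v_r = (1,...,1,0,...,0) with r ones. -/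
open Fin.NatCast

/-!
Write `y_i = x_i + x_{i+k}`, so that `D x = Σ y_i²` and `Σ y_i = 2r` for every admissible `x`.
For integers `(y - a)(y - a - 1) ≥ 0`, i.e. `y² ≥ (2a+1) y - a(a+1)`, with equality exactly when
`y ∈ {a, a+1}`. Summing, `D x ≥ (2a+1)·2r - m·a(a+1)` for all admissible `x`, and `v_r` attains this
bound: its pair sums `y_i` all lie in `{0, 1}` when `r ≤ k` and in `{1, 2}` when `r > k`.
-/

theorem Int.sum_sq_le_sum_sq_of_forall_eq_or_eq {ι : Type*} (s : Finset ι) (a : ℤ)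
    {w y : ι → ℤ} (hw : ∀ i ∈ s, w i = a ∨ w i = a + 1)
    (hsum : ∑ i ∈ s, w i = ∑ i ∈ s, y i) :
    ∑ i ∈ s, w i ^ 2 ≤ ∑ i ∈ s, y i ^ 2 := by
  have tangent : ∑ i ∈ s, (w i ^ 2 - (2 * a + 1) * w i) ≤
      ∑ i ∈ s, (y i ^ 2 - (2 * a + 1) * y i) := by
    refine Finset.sum_le_sum fun i hi => ?_
    have : 0 ≤ (y i - a) * (y i - (a + 1)) := by
      rcases le_or_gt (y i) a with h | h
      · nlinarith
      · nlinarith [show a + 1 ≤ y i from h]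
    rcases hw i hi with h | h <;> rw [h] <;> nlinarith
  simp only [Finset.sum_sub_distrib, ← Finset.mul_sum, hsum] at tangent
  linarith

theorem Fintype.sum_add_comp_add_right {G M : Type*} [AddGroup G] [Fintype G] [AddCommMonoid M]
    (x : G → M) (c : G) : ∑ i, (x i + x (i + c)) = 2 • ∑ i, x i := by
  rw [Finset.sum_add_distrib,
    Fintype.sum_equiv (Equiv.addRight c) (fun i => x (i + c)) x fun _ => rfl, two_nsmul]

theorem Fin.sum_ite_val_lt {m r : ℕ} (hr : r ≤ m) :
    ∑ i : Fin m, (if (i : ℕ) < r then (1 : ℤ) else 0) = r := by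
  rw [Finset.sum_boole, Fin.card_filter_val_lt, min_eq_right hr]

theorem Fin.val_add_natCast_half (k : ℕ) (i : Fin (2 * k + 1)) :
    ((i + (k : Fin (2 * k + 1)) : Fin (2 * k + 1)) : ℕ) =
      if (i : ℕ) ≤ k then (i : ℕ) + k else (i : ℕ) - (k + 1) := by
  have hk : k < 2 * k + 1 := by omega
  rw [Fin.val_add, Fin.val_natCast, Nat.mod_eq_of_lt hk]
  have := i.isLt
  split_ifs with h
  · exact Nat.mod_eq_of_lt (by omega)
  · rw [Nat.mod_eq_sub_mod (by omega), Nat.mod_eq_of_lt (by omega)]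
    omega

theorem Fin.ite_val_lt_add_ite_val_add_half_eq_or_eq (k r : ℕ) (i : Fin (2 * k + 1)) :
    let v : Fin (2 * k + 1) → ℤ := fun i => if (i : ℕ) < r then 1 else 0
    let a : ℤ := if r ≤ k then 0 else 1
    v i + v (i + (k : Fin (2 * k + 1))) = a ∨ v i + v (i + (k : Fin (2 * k + 1))) = a + 1 := by
  intro v a
  simp only [v, a]
  rw [Fin.val_add_natCast_half]
  have := i.isLt
  split_ifs <;> omega

theorem stmt13_general (k : ℕ) (r : ℕ) (hr : r ≤ 2 * k) :
    let m := 2 * k + 1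
    let D : (Fin m → ℤ) → ℤ := fun x => ∑ i, (x i + x (i + (k : Fin m))) ^ 2
    let v : Fin m → ℤ := fun i => if (i : ℕ) < r then 1 else 0
    ∀ x : Fin m → ℤ, (∑ i, x i) = (r : ℤ) → D v ≤ D x := by
  intro m D v x hx
  refine Int.sum_sq_le_sum_sq_of_forall_eq_or_eq Finset.univ (if r ≤ k then 0 else 1)
    (fun i _ => Fin.ite_val_lt_add_ite_val_add_half_eq_or_eq k r i) ?_
  rw [Fintype.sum_add_comp_add_right, Fintype.sum_add_comp_add_right, hx,
    Fin.sum_ite_val_lt (by omega)]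

/-- For odd `m = 2k+1`, the cyclic form `D(x) = Σ (x_i + x_{i+k})²` satisfies
Condition (r) for `0 ≤ r ≤ m-1`. -/
theorem stmt13 (k : ℕ) (hk : 1 ≤ k) (r : ℕ) (hr : r ≤ 2 * k) :
    let m := 2 * k + 1
    let D : (Fin m → ℤ) → ℤ := fun x => ∑ i, (x i + x (i + (k : Fin m))) ^ 2
    let v : Fin m → ℤ := fun i => if (i : ℕ) < r then 1 else 0
    ∀ x : Fin m → ℤ, (∑ i, x i) = (r : ℤ) → D v ≤ D x :=
  stmt13_general k r hr
end
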